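/- arXiv:2004.01226 — 3 statements merged into one kernel-verified Lean document; each statement's English description precedes it below -/
import Mathlib

section
/- Let 0 < ν < 2, ω = ½√(4-ν²), and q₀, s₀ ∈ ℝ. Define A₁₁ = (νs₀+2q₀)/√(4-ν²), A₁₂ = (νq₀+2s₀)/√(4-ν²), F(t) = 1 - s₀ + (A₁₁ sin ωt + s₀ cos ωt)e^{-νt/2}, G(t) = (-A₁₂ sin ωt + q₀ cos ωt)e^{-νt/2}. Then on any interval where F(t) ≠ 0, the functions q(t) = G(t)/F(t) and s(t) = -q'(t) - q(t)² - νq(t) satisfy the system q' = -s - q² - νq, s' = q - qs with q(0) = q₀, s(0) = s₀. -/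
/-!
The system linearizes: if `F' = G` and `G' = -νG - F + c`, then `q = G / F` satisfies
`q' = -(1 - c/F) - q² - νq`, so `s = 1 - c/F` and `s' = cG/F² = q(1 - s)`. With `c = 1 - s₀`,
`F - c` solves the damped oscillator `y'' + νy' + y = 0`, whose solutions for `0 < ν < 2` are
`(a sin ωt + b cos ωt) e^{-νt/2}` with `ω² + (ν/2)² = 1`; the constants `A₁₁`, `A₁₂` are chosen
so that `G = F'` and `(q, s)` starts at `(q₀, s₀)`.
-/

section Riccati

variable {F G : ℝ → ℝ} {ν c t : ℝ}

lemma hasDerivAt_div_of_linear (hF : HasDerivAt F (G t) t)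
    (hG : HasDerivAt G (-ν * G t - F t + c) t) (ht : F t ≠ 0) :
    HasDerivAt (fun u => G u / F u) (-(1 - c / F t) - (G t / F t) ^ 2 - ν * (G t / F t)) t := by
  refine (hG.div hF ht).congr_deriv ?_
  field_simp
  ring

lemma hasDerivAt_one_sub_const_div (hF : HasDerivAt F (G t) t) (ht : F t ≠ 0) :
    HasDerivAt (fun u => 1 - c / F u) (G t / F t - G t / F t * (1 - c / F t)) t := by
  refine (((hasDerivAt_const t c).div hF ht).const_sub 1).congr_deriv ?_
  field_simp
  ring

lemma riccati_eq_one_sub_div_of_linear (hF : HasDerivAt F (G t) t)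
    (hG : HasDerivAt G (-ν * G t - F t + c) t) (ht : F t ≠ 0) :
    -deriv (fun u => G u / F u) t - (G t / F t) ^ 2 - ν * (G t / F t) = 1 - c / F t := by
  rw [(hasDerivAt_div_of_linear hF hG ht).deriv]
  ring

theorem riccati_of_linear (hF : ∀ u, HasDerivAt F (G u) u)
    (hG : ∀ u, HasDerivAt G (-ν * G u - F u + c) u) {q s : ℝ → ℝ}
    (hq : q = fun u => G u / F u) (hs : s = fun u => -deriv q u - q u ^ 2 - ν * q u)
    (ht : F t ≠ 0) :
    HasDerivAt q (-s t - q t ^ 2 - ν * q t) t ∧ HasDerivAt s (q t - q t * s t) t := by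
  subst hq hs
  have hs_eq : ∀ u, F u ≠ 0 →
      -deriv (fun u => G u / F u) u - (G u / F u) ^ 2 - ν * (G u / F u) = 1 - c / F u :=
    fun u hu => riccati_eq_one_sub_div_of_linear (hF u) (hG u) hu
  simp only [hs_eq t ht]
  refine ⟨hasDerivAt_div_of_linear (hF t) (hG t) ht, ?_⟩
  refine (hasDerivAt_one_sub_const_div (hF t) ht).congr_of_eventuallyEq ?_
  filter_upwards [(hF t).continuousAt.eventually_ne ht] with u hu
  exact hs_eq u hu

end Riccati

section DampedOscillator

noncomputable def dampedTrig (ω ν a b t : ℝ) : ℝ :=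
  (a * Real.sin (ω * t) + b * Real.cos (ω * t)) * Real.exp (-(ν * t) / 2)

variable {ω ν a b : ℝ}

@[simp]
lemma dampedTrig_zero : dampedTrig ω ν a b 0 = b := by
  simp [dampedTrig]

lemma hasDerivAt_dampedTrig (t : ℝ) :
    HasDerivAt (dampedTrig ω ν a b)
      (dampedTrig ω ν (-(b * ω) - a * (ν / 2)) (a * ω - b * (ν / 2)) t) t := by
  have hlin : HasDerivAt (fun t : ℝ => ω * t) ω t := by
    simpa using (hasDerivAt_id t).const_mul ω
  have hdamp : HasDerivAt (fun t : ℝ => -(ν * t) / 2) (-ν / 2) t := by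
    simpa [neg_div] using ((hasDerivAt_id t).const_mul ν).neg.div_const 2
  have hexp := (Real.hasDerivAt_exp _).comp t hdamp
  have hsin := (Real.hasDerivAt_sin (ω * t)).comp t hlin
  have hcos := (Real.hasDerivAt_cos (ω * t)).comp t hlin
  refine (((hsin.const_mul a).add (hcos.const_mul b)).mul hexp).congr_deriv ?_
  simp only [dampedTrig, Function.comp_apply, Pi.add_apply]
  ring

lemma hasDerivAt_dampedTrig_deriv (hω : ω ^ 2 + (ν / 2) ^ 2 = 1) (t : ℝ) :
    HasDerivAt (dampedTrig ω ν (-(b * ω) - a * (ν / 2)) (a * ω - b * (ν / 2)))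
      (-ν * dampedTrig ω ν (-(b * ω) - a * (ν / 2)) (a * ω - b * (ν / 2)) t
        - dampedTrig ω ν a b t) t := by
  refine (hasDerivAt_dampedTrig t).congr_deriv ?_
  simp only [dampedTrig]
  linear_combination
    -(a * Real.sin (ω * t) + b * Real.cos (ω * t)) * Real.exp (-(ν * t) / 2) * hω

end DampedOscillator

/-- Explicit solution of the derivative system q' = -s - q² - νq, s' = q - qs
for 0 < ν < 2, via linearization: q = G/F, wherever F ≠ 0. -/
theorem qs_solution_underdamped (ν : ℝ) (hν0 : 0 < ν) (hν2 : ν < 2)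
    (q₀ s₀ : ℝ)
    (ω : ℝ) (hω : ω = (1/2) * Real.sqrt (4 - ν ^ 2))
    (A₁₁ A₁₂ : ℝ)
    (hA11 : A₁₁ = (ν * s₀ + 2 * q₀) / Real.sqrt (4 - ν ^ 2))
    (hA12 : A₁₂ = (ν * q₀ + 2 * s₀) / Real.sqrt (4 - ν ^ 2))
    (F G : ℝ → ℝ)
    (hF : F = fun t => 1 - s₀ + (A₁₁ * Real.sin (ω * t) + s₀ * Real.cos (ω * t)) * Real.exp (-(ν * t) / 2))
    (hG : G = fun t => (-A₁₂ * Real.sin (ω * t) + q₀ * Real.cos (ω * t)) * Real.exp (-(ν * t) / 2))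
    (q s : ℝ → ℝ)
    (hq : q = fun t => G t / F t)
    (hs : s = fun t => -deriv q t - q t ^ 2 - ν * q t) :
    (∀ t : ℝ, F t ≠ 0 →
      HasDerivAt q (-s t - q t ^ 2 - ν * q t) t ∧ HasDerivAt s (q t - q t * s t) t) ∧
      q 0 = q₀ ∧ s 0 = s₀ := by
  have h4 : 0 < 4 - ν ^ 2 := by nlinarith
  have hr : Real.sqrt (4 - ν ^ 2) ^ 2 = 4 - ν ^ 2 := Real.sq_sqrt h4.le
  have hr0 : Real.sqrt (4 - ν ^ 2) ≠ 0 := (Real.sqrt_pos.mpr h4).ne'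
  have hfreq : ω ^ 2 + (ν / 2) ^ 2 = 1 := by rw [hω]; linear_combination hr / 4
  have hcos : A₁₁ * ω - s₀ * (ν / 2) = q₀ := by rw [hA11, hω]; field_simp; ring
  have hsin : -(s₀ * ω) - A₁₁ * (ν / 2) = -A₁₂ := by
    rw [hA11, hA12, hω]; field_simp; linear_combination (-s₀) * hr
  have hF_eq : F = fun t => 1 - s₀ + dampedTrig ω ν A₁₁ s₀ t := hF
  have hG_eq : G = dampedTrig ω ν (-(s₀ * ω) - A₁₁ * (ν / 2)) (A₁₁ * ω - s₀ * (ν / 2)) := by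
    rw [hsin, hcos, hG]; rfl
  have hF' : ∀ u, HasDerivAt F (G u) u := fun u => by
    rw [hF_eq, hG_eq]; exact (hasDerivAt_dampedTrig u).const_add _
  have hG' : ∀ u, HasDerivAt G (-ν * G u - F u + (1 - s₀)) u := fun u => by
    rw [hF_eq, hG_eq]; exact (hasDerivAt_dampedTrig_deriv hfreq u).congr_deriv (by ring)
  have hF0 : F 0 = 1 := by simp [hF_eq]
  have hG0 : G 0 = q₀ := by simp [hG_eq, hcos]
  refine ⟨fun t ht => riccati_of_linear hF' hG' hq hs ht, by simp [hq, hF0, hG0], ?_⟩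
  have hF0' : F 0 ≠ 0 := by simp [hF0]
  rw [hs, hq]
  beta_reduce
  rw [riccati_eq_one_sub_div_of_linear (hF' 0) (hG' 0) hF0', hF0]
  ring
end

section
/- Let ν = 2 and q₀, s₀ ∈ ℝ. Define F(t) = 1 - s₀ + (s₀ + (s₀+q₀)t)e^{-t} and G(t) = -(s₀ + (s₀+q₀)(t-1))e^{-t}. Then F(0) = 1, G(0) = q₀, and on any interval where F ≠ 0, q(t) = G(t)/F(t) together with s(t) = -q'(t) - q(t)² - 2q(t) solves q' = -s - q² - 2q, s' = q - qs with q(0)=q₀, s(0)=s₀. -/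
/-!
The Riccati substitution `q = F' / F`, `s = 1 - c / F` turns the system
`q' = -s - q² - ν q`, `s' = q - q s` into the linear equation `F'' + ν F' + F = c`.
For `ν = 2` this is critically damped, with general solution `F = c + (a + b t) e^{-t}`;
the given `F` is the one with `F(0) = 1`, `F'(0) = q₀`, and `c = 1 - s₀`.
The function `s` of the statement agrees with `1 - c / F` wherever `F ≠ 0`, because there
`q` is differentiable and the first equation of the system holds for `1 - c / F`.
-/

open Real Filter Topology

section RiccatiSubstitution

variable {F F' : ℝ → ℝ} {F'' ν c t : ℝ}

theorem hasDerivAt_div_of_linear_ode (hF : HasDerivAt F (F' t) t) (hF' : HasDerivAt F' F'' t)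
    (hode : F'' + ν * F' t + F t = c) (ht : F t ≠ 0) :
    HasDerivAt (fun u => F' u / F u)
      (-(1 - c / F t) - (F' t / F t) ^ 2 - ν * (F' t / F t)) t := by
  refine (hF'.div hF ht).congr_deriv ?_
  rw [← hode]
  field_simp
  ring

theorem hasDerivAt_one_sub_div (hF : HasDerivAt F (F' t) t) (ht : F t ≠ 0) :
    HasDerivAt (fun u => 1 - c / F u)
      (F' t / F t - F' t / F t * (1 - c / F t)) t := by
  refine (((hasDerivAt_const t c).div hF ht).const_sub 1).congr_deriv ?_
  field_simp
  ring

end RiccatiSubstitution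

theorem hasDerivAt_affine_mul_exp_neg (a b t : ℝ) :
    HasDerivAt (fun u => (a + b * u) * exp (-u)) ((b - a - b * t) * exp (-t)) t := by
  have hlin : HasDerivAt (fun u => a + b * u) b t := by
    simpa using ((hasDerivAt_id t).const_mul b).const_add a
  refine (hlin.mul (hasDerivAt_neg t).exp).congr_deriv ?_
  ring

/-- Explicit solution of the derivative system q' = -s - q² - 2q, s' = q - qs
at the critical collision frequency ν = 2, via linearization. -/
theorem qs_solution_critical (q₀ s₀ : ℝ) (F G : ℝ → ℝ)
    (hF : F = fun t => 1 - s₀ + (s₀ + (s₀ + q₀) * t) * Real.exp (-t))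
    (hG : G = fun t => -(s₀ + (s₀ + q₀) * (t - 1)) * Real.exp (-t))
    (q s : ℝ → ℝ)
    (hq : q = fun t => G t / F t)
    (hs : s = fun t => -deriv q t - q t ^ 2 - 2 * q t) :
    F 0 = 1 ∧ G 0 = q₀ ∧
    (∀ t : ℝ, F t ≠ 0 →
      HasDerivAt q (-s t - q t ^ 2 - 2 * q t) t ∧ HasDerivAt s (q t - q t * s t) t) ∧
      q 0 = q₀ ∧ s 0 = s₀ := by
  have hG_affine : G = fun t => (q₀ + -(s₀ + q₀) * t) * exp (-t) := by rw [hG]; ext; ring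
  have hF' (t : ℝ) : HasDerivAt F (G t) t := by
    rw [hF, hG]
    exact ((hasDerivAt_affine_mul_exp_neg _ _ t).const_add _).congr_deriv (by ring)
  have hG' (t : ℝ) : HasDerivAt G (-(s₀ + q₀) * exp (-t) - G t) t := by
    rw [hG_affine]
    exact (hasDerivAt_affine_mul_exp_neg _ _ t).congr_deriv (by ring)
  have hode (t : ℝ) : (-(s₀ + q₀) * exp (-t) - G t) + 2 * G t + F t = 1 - s₀ := by
    rw [hF, hG]; ring
  have hq' (t : ℝ) (ht : F t ≠ 0) :
      HasDerivAt q (-(1 - (1 - s₀) / F t) - q t ^ 2 - 2 * q t) t := by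
    subst hq
    exact hasDerivAt_div_of_linear_ode (hF' t) (hG' t) (hode t) ht
  have hs_eq (t : ℝ) (ht : F t ≠ 0) : s t = 1 - (1 - s₀) / F t := by
    simp only [hs, (hq' t ht).deriv]
    ring
  have hF0 : F 0 = 1 := by simp [hF]
  have hG0 : G 0 = q₀ := by simp [hG]
  refine ⟨hF0, hG0, fun t ht => ⟨?_, ?_⟩, by simp [hq, hF0, hG0], by simp [hs_eq 0, hF0]⟩
  · rw [hs_eq t ht]
    exact hq' t ht
  · have hs_near : s =ᶠ[𝓝 t] fun u => 1 - (1 - s₀) / F u :=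
      ((hF' t).continuousAt.eventually_ne ht).mono hs_eq
    rw [hs_eq t ht, hq]
    exact (hasDerivAt_one_sub_div (hF' t) ht).congr_of_eventuallyEq hs_near
end

section
/- Let ν > 2 and set z± = (-ν ± √(ν²-4))/2, m = (1/√(ν²-4))·ln((ν√(ν²-4) + ν² - 2)/2), and k_cr(ν) = √(ν²-4)/(e^{z₊m} - e^{z₋m}). Then m > 0, m is strictly decreasing in ν, m → 0 as ν → ∞, and k_cr(ν) → ∞ as ν → ∞. -/
open Filter

private lemma sinh_lt_mul_cosh {t : ℝ} (ht : 0 < t) : Real.sinh t < t * Real.cosh t := by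
  have hmono : StrictMonoOn (fun x => x * Real.cosh x - Real.sinh x) (Set.Ici (0:ℝ)) := by
    apply strictMonoOn_of_deriv_pos (convex_Ici 0)
    · exact ((continuous_id.mul Real.continuous_cosh).sub Real.continuous_sinh).continuousOn
    · intro x hx
      rw [interior_Ici] at hx
      have h : HasDerivAt (fun x : ℝ => x * Real.cosh x - Real.sinh x)
          (1 * Real.cosh x + x * Real.sinh x - Real.cosh x) x :=
        ((hasDerivAt_id x).mul (Real.hasDerivAt_cosh x)).sub (Real.hasDerivAt_sinh x)
      rw [h.deriv]
      have hx' := Set.mem_Ioi.mp hx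
      have hs := Real.sinh_pos_iff.mpr hx'
      nlinarith [mul_pos hx' hs]
  have := hmono Set.self_mem_Ici (Set.mem_Ici.mpr ht.le) ht
  simpa using this

private lemma sinh_div_mono : StrictMonoOn (fun t => Real.sinh t / t) (Set.Ioi (0:ℝ)) := by
  apply strictMonoOn_of_deriv_pos (convex_Ioi 0)
  · exact Real.continuous_sinh.continuousOn.div continuousOn_id fun x hx => ne_of_gt hx
  · intro x hx
    rw [interior_Ioi] at hx
    have h : HasDerivAt (fun t => Real.sinh t / t)
        ((Real.cosh x * x - Real.sinh x * 1) / x ^ 2) x :=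
      (Real.hasDerivAt_sinh x).div (hasDerivAt_id x) (ne_of_gt hx)
    rw [h.deriv]
    have h1 := sinh_lt_mul_cosh hx
    apply div_pos (by nlinarith) (pow_pos hx 2)

private lemma g_anti {a b : ℝ} (ha : 0 < a) (hab : a < b) :
    b / Real.sinh b < a / Real.sinh a := by
  have hb : 0 < b := ha.trans hab
  have hsa : 0 < Real.sinh a := Real.sinh_pos_iff.mpr ha
  have hsb : 0 < Real.sinh b := Real.sinh_pos_iff.mpr hb
  have h := sinh_div_mono (Set.mem_Ioi.mpr ha) (Set.mem_Ioi.mpr hb) hab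
  rw [div_lt_div_iff₀ ha hb] at h
  rw [div_lt_div_iff₀ hsb hsa]
  nlinarith

private lemma s_facts {ν : ℝ} (hν : 2 < ν) :
    0 < Real.sqrt (ν ^ 2 - 4) ∧ Real.sqrt (ν ^ 2 - 4) < ν ∧
      (Real.sqrt (ν ^ 2 - 4)) ^ 2 = ν ^ 2 - 4 := by
  have h4 : (0:ℝ) ≤ ν ^ 2 - 4 := by nlinarith
  refine ⟨Real.sqrt_pos.mpr (by nlinarith), ?_, Real.sq_sqrt h4⟩
  have : Real.sqrt (ν ^ 2 - 4) < Real.sqrt (ν ^ 2) := Real.sqrt_lt_sqrt h4 (by nlinarith)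
  rwa [Real.sqrt_sq (by linarith)] at this

private lemma m_eq {ν : ℝ} (hν : 2 < ν) :
    (1 / Real.sqrt (ν ^ 2 - 4)) * Real.log ((ν * Real.sqrt (ν ^ 2 - 4) + ν ^ 2 - 2) / 2)
      = Real.log ((ν + Real.sqrt (ν ^ 2 - 4)) / 2) /
        Real.sinh (Real.log ((ν + Real.sqrt (ν ^ 2 - 4)) / 2)) := by
  obtain ⟨hs0, hsν, hs2⟩ := s_facts hν
  set s := Real.sqrt (ν ^ 2 - 4) with hs
  set u := (ν + s) / 2 with hu
  have hu1 : 1 < u := by rw [hu]; nlinarith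
  have hu0 : (0:ℝ) < u := by linarith
  have harg : (ν * s + ν ^ 2 - 2) / 2 = u ^ 2 := by rw [hu]; field_simp; nlinarith
  have hinv : u⁻¹ = (ν - s) / 2 := by
    have hmul : u * ((ν - s) / 2) = 1 := by rw [hu]; field_simp; nlinarith
    exact inv_eq_of_mul_eq_one_right hmul
  have hsinh : Real.sinh (Real.log u) = s / 2 := by
    rw [Real.sinh_eq, Real.exp_log hu0, Real.exp_neg, Real.exp_log hu0, hinv, hu]
    ring
  rw [harg, hsinh, Real.log_pow]
  push_cast
  field_simp

private lemma u_lt_u {a b : ℝ} (ha : 2 < a) (hab : a < b) :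
    (a + Real.sqrt (a ^ 2 - 4)) / 2 < (b + Real.sqrt (b ^ 2 - 4)) / 2 := by
  have h1 : Real.sqrt (a ^ 2 - 4) < Real.sqrt (b ^ 2 - 4) :=
    Real.sqrt_lt_sqrt (by nlinarith) (by nlinarith)
  linarith

/-- For ν > 2, with m(ν) the blow-up time and k_cr(ν) the critical velocity amplitude:
m > 0, m strictly decreasing on (2,∞), m → 0 and k_cr → ∞ as ν → ∞. -/
theorem m_kcr_properties
    (m k_cr : ℝ → ℝ)
    (hm : m = fun ν => (1 / Real.sqrt (ν ^ 2 - 4)) *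
      Real.log ((ν * Real.sqrt (ν ^ 2 - 4) + ν ^ 2 - 2) / 2))
    (hk : k_cr = fun ν => Real.sqrt (ν ^ 2 - 4) /
      (Real.exp (((-ν + Real.sqrt (ν ^ 2 - 4)) / 2) * m ν) -
       Real.exp (((-ν - Real.sqrt (ν ^ 2 - 4)) / 2) * m ν))) :
    (∀ ν : ℝ, 2 < ν → 0 < m ν) ∧
    StrictAntiOn m (Set.Ioi (2:ℝ)) ∧
    Tendsto m atTop (nhds 0) ∧
    Tendsto k_cr atTop atTop := by
  have hpos : ∀ ν : ℝ, 2 < ν → 0 < m ν := by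
    intro ν hν
    rw [hm]
    simp only
    rw [m_eq hν]
    obtain ⟨hs0, hsν, hs2⟩ := s_facts hν
    have hu1 : (1:ℝ) < (ν + Real.sqrt (ν ^ 2 - 4)) / 2 := by nlinarith
    have hL : 0 < Real.log ((ν + Real.sqrt (ν ^ 2 - 4)) / 2) := Real.log_pos hu1
    exact div_pos hL (Real.sinh_pos_iff.mpr hL)
  refine ⟨hpos, ?_, ?_, ?_⟩
  · -- strict anti
    intro a ha b hb hab
    simp only [Set.mem_Ioi] at ha hb
    rw [hm]
    simp only
    rw [m_eq ha, m_eq hb]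
    have hua : (1:ℝ) < (a + Real.sqrt (a ^ 2 - 4)) / 2 := by
      obtain ⟨hs0, _, _⟩ := s_facts ha; nlinarith
    have hLa : 0 < Real.log ((a + Real.sqrt (a ^ 2 - 4)) / 2) := Real.log_pos hua
    have hLab : Real.log ((a + Real.sqrt (a ^ 2 - 4)) / 2)
        < Real.log ((b + Real.sqrt (b ^ 2 - 4)) / 2) :=
      Real.log_lt_log (by linarith) (u_lt_u ha hab)
    exact g_anti hLa hLab
  · -- m → 0
    have hupper : ∀ᶠ ν : ℝ in atTop, m ν ≤ 4 * (Real.log ν / ν) := by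
      filter_upwards [eventually_ge_atTop (3:ℝ)] with ν hν3
      have hν : (2:ℝ) < ν := by linarith
      obtain ⟨hs0, hsν, hs2⟩ := s_facts hν
      set s := Real.sqrt (ν ^ 2 - 4) with hs
      have harg_le : (ν * s + ν ^ 2 - 2) / 2 ≤ ν ^ 2 := by nlinarith
      have harg_pos : (0:ℝ) < (ν * s + ν ^ 2 - 2) / 2 := by nlinarith
      have hlog_le : Real.log ((ν * s + ν ^ 2 - 2) / 2) ≤ 2 * Real.log ν := by
        calc Real.log ((ν * s + ν ^ 2 - 2) / 2) ≤ Real.log (ν ^ 2) :=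
              Real.log_le_log harg_pos harg_le
          _ = 2 * Real.log ν := by
              rw [Real.log_pow]; push_cast; ring
      have hlog_nonneg : 0 ≤ Real.log ((ν * s + ν ^ 2 - 2) / 2) :=
        Real.log_nonneg (by nlinarith)
      have hsge : ν / 2 ≤ s := by
        rw [show ν / 2 = Real.sqrt ((ν / 2) ^ 2) from (Real.sqrt_sq (by linarith)).symm]
        exact Real.sqrt_le_sqrt (by nlinarith)
      have hinv : 1 / s ≤ 2 / ν := by
        rw [div_le_div_iff₀ hs0 (by linarith : (0:ℝ) < ν)]
        linarith
      rw [hm]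
      simp only
      calc (1 / s) * Real.log ((ν * s + ν ^ 2 - 2) / 2)
          ≤ (2 / ν) * (2 * Real.log ν) := by
            apply mul_le_mul hinv hlog_le hlog_nonneg (by positivity)
        _ = 4 * (Real.log ν / ν) := by ring
    have hlower : ∀ᶠ ν : ℝ in atTop, (0:ℝ) ≤ m ν := by
      filter_upwards [eventually_gt_atTop (2:ℝ)] with ν hν
      exact (hpos ν hν).le
    have hlim : Tendsto (fun ν : ℝ => 4 * (Real.log ν / ν)) atTop (nhds 0) := by
      have h := Real.isLittleO_log_id_atTop.tendsto_div_nhds_zero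
      have h2 := h.const_mul (4:ℝ)
      simpa using h2
    exact tendsto_of_tendsto_of_tendsto_of_le_of_le' tendsto_const_nhds hlim hlower hupper
  · -- k_cr → ∞
    have hsqrt : Tendsto (fun ν : ℝ => Real.sqrt (ν ^ 2 - 4)) atTop atTop := by
      apply tendsto_atTop_mono' atTop
        (show ∀ᶠ ν : ℝ in atTop, ν / 2 ≤ Real.sqrt (ν ^ 2 - 4) by
          filter_upwards [eventually_ge_atTop (3:ℝ)] with ν hν3
          rw [show ν / 2 = Real.sqrt ((ν / 2) ^ 2) from (Real.sqrt_sq (by linarith)).symm]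
          exact Real.sqrt_le_sqrt (by nlinarith))
      exact tendsto_id.atTop_div_const two_pos
    apply tendsto_atTop_mono' atTop _ hsqrt
    filter_upwards [eventually_gt_atTop (2:ℝ)] with ν hν
    obtain ⟨hs0, hsν, hs2⟩ := s_facts hν
    set s := Real.sqrt (ν ^ 2 - 4) with hs
    have hmν : 0 < m ν := hpos ν hν
    have hzp : (-ν + s) / 2 < 0 := by linarith
    have hzlt : (-ν - s) / 2 < (-ν + s) / 2 := by linarith
    have hD1 : Real.exp (((-ν + s) / 2) * m ν) < 1 := by
      rw [show (1:ℝ) = Real.exp 0 from (Real.exp_zero).symm]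
      exact Real.exp_lt_exp.mpr (mul_neg_of_neg_of_pos hzp hmν)
    have hD0 : 0 < Real.exp (((-ν + s) / 2) * m ν) - Real.exp (((-ν - s) / 2) * m ν) := by
      rw [sub_pos]
      exact Real.exp_lt_exp.mpr (mul_lt_mul_of_pos_right hzlt hmν)
    rw [hk]
    simp only
    rw [← hs, le_div_iff₀ hD0]
    nlinarith [mul_lt_mul_of_pos_left hD1 hs0, mul_pos hs0 (Real.exp_pos (((-ν - s) / 2) * m ν))]
end
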